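/- arXiv:1207.6355 — 2 statements merged into one kernel-verified Lean document; each statement's English description precedes it below -/
import Mathlib

section
/- (Mrs. Gerber's Lemma) For each fixed x ∈ [0, log 2], the function y ↦ f₂(x,y) is convex on [0, log 2]; by symmetry, for each fixed y ∈ [0, log 2], the function x ↦ f₂(x,y) is convex on [0, log 2]. -/
noncomputable def binEnt (p : ℝ) : ℝ := -p * Real.log p - (1 - p) * Real.log (1 - p)

noncomputable def binEntInv (x : ℝ) : ℝ :=
  sInf {p : ℝ | p ∈ Set.Icc (0 : ℝ) (1 / 2) ∧ binEnt p = x}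

noncomputable def starOp (p q : ℝ) : ℝ := p * (1 - q) + q * (1 - p)

noncomputable def f₂ (x y : ℝ) : ℝ := binEnt (starOp (binEntInv x) (binEntInv y))

/-- Shannon entropy (natural log) of a discrete random variable `X` on `(Ω, μ)`. -/
noncomputable def entropy {Ω S : Type*} [MeasurableSpace Ω] (μ : MeasureTheory.Measure Ω)
    (X : Ω → S) : ℝ :=
  ∑' s : S, Real.negMulLog ((μ (X ⁻¹' {s})).toReal)

/-- Conditional Shannon entropy `H(X | U) = H(X, U) - H(U)`. -/
noncomputable def condEntropy {Ω S T : Type*} [MeasurableSpace Ω] (μ : MeasureTheory.Measure Ω)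
    (X : Ω → S) (U : Ω → T) : ℝ :=
  entropy μ (fun ω => (X ω, U ω)) - entropy μ U

/-- Independence of two discrete random variables. -/
def IndepRV {Ω S T : Type*} [MeasurableSpace Ω] (μ : MeasureTheory.Measure Ω)
    (X : Ω → S) (Y : Ω → T) : Prop :=
  ∀ (a : S) (b : T), μ (X ⁻¹' {a} ∩ Y ⁻¹' {b}) = μ (X ⁻¹' {a}) * μ (Y ⁻¹' {b})

/-- Mutual independence of a finite family of discrete random variables. -/
def iIndepRV {Ω G ι : Type*} [Fintype ι] [MeasurableSpace Ω] (μ : MeasureTheory.Measure Ω)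
    (X : ι → Ω → G) : Prop :=
  ∀ a : ι → G, μ (⋂ i, X i ⁻¹' {a i}) = ∏ i, μ (X i ⁻¹' {a i})

/-- `fG G x y` : the minimum entropy `H(X+Y)` over independent `G`-valued random variables
`X, Y` with `H(X) = x` and `H(Y) = y`. -/
noncomputable def fG (G : Type) [AddCommGroup G] (x y : ℝ) : ℝ :=
  sInf { z : ℝ | ∃ (Ω : Type) (_ : MeasurableSpace Ω) (μ : MeasureTheory.Measure Ω),
    MeasureTheory.IsProbabilityMeasure μ ∧ ∃ X Y : Ω → G, IndepRV μ X Y ∧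
      entropy μ X = x ∧ entropy μ Y = y ∧ entropy μ (fun ω => X ω + Y ω) = z }

/-- `fGk G k x` : the minimum entropy `H(X₁ + ⋯ + X_k)` over `k` mutually independent
`G`-valued random variables with `H(Xᵢ) = xᵢ`. -/
noncomputable def fGk (G : Type) [AddCommGroup G] (k : ℕ) (x : Fin k → ℝ) : ℝ :=
  sInf { z : ℝ | ∃ (Ω : Type) (_ : MeasurableSpace Ω) (μ : MeasureTheory.Measure Ω),
    MeasureTheory.IsProbabilityMeasure μ ∧ ∃ X : Fin k → Ω → G, iIndepRV μ X ∧
      (∀ i, entropy μ (X i) = x i) ∧ entropy μ (fun ω => ∑ i, X i ω) = z }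

/-- Iterated application `fG G x₁ (fG G x₂ (… (fG G x_{r-1} x_r)…))`. -/
noncomputable def iterFG (G : Type) [AddCommGroup G] : List ℝ → ℝ
  | [] => 0
  | [a] => a
  | a :: b :: rest => fG G a (iterFG G (b :: rest))

/-! Fix `p ∈ [0, 1/2]` and write `q = h⁻¹ y`, `s = p ⋆ q = p + (1 - 2p) q`. Since
`(h⁻¹)' = 1 / h'(q)`, the map `y ↦ h (p ⋆ h⁻¹ y)` has derivative `(1 - 2p) h'(s) / h'(q)`, and
`h⁻¹` is increasing, so convexity follows once `q ↦ h'(s) / h'(q)` is increasing on `(0, 1/2)`.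
As `h'' t = -1 / (t (1 - t))`, the derivative of that ratio has the sign of
`ψ(s) - (1 - 2p) ψ(q)`, where `ψ t = t (1 - t) h'(t)`. Since `s = (1 - 2p) q + 2p · 1/2` and
`ψ (1/2) = 0`, this is concavity of `ψ` on `(0, 1/2]`, which holds because
`ψ' t = (1 - 2t) h'(t) - 1` with both factors nonnegative and decreasing. The second claim follows
from the first since `⋆` is commutative.
-/

open Real Set

lemma binEnt_eq_binEntropy : binEnt = binEntropy := by
  ext p
  simp only [binEnt, binEntropy, log_inv]
  ring

lemma binEntInv_eq {p x : ℝ} (hp : p ∈ Icc 0 2⁻¹) (hx : binEntropy p = x) :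
    binEntInv x = p := by
  have hset : {q : ℝ | q ∈ Icc 0 (1 / 2) ∧ binEnt q = x} = {p} := by
    ext q
    simp only [one_div, binEnt_eq_binEntropy, mem_ofPred_eq, mem_singleton_iff]
    exact ⟨fun ⟨hq, hqx⟩ => binEntropy_strictMonoOn.injOn hq hp (hqx.trans hx.symm),
      fun hq => hq ▸ ⟨hp, hx⟩⟩
  rw [binEntInv, hset, csInf_singleton]

lemma binEntInv_binEntropy {p : ℝ} (hp : p ∈ Icc 0 2⁻¹) : binEntInv (binEntropy p) = p :=
  binEntInv_eq hp rfl

lemma exists_binEntropy_eq {x : ℝ} (hx : x ∈ Icc 0 (log 2)) :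
    ∃ p ∈ Icc 0 2⁻¹, binEntropy p = x :=
  intermediate_value_Icc (by norm_num) binEntropy_continuous.continuousOn (by simpa using hx)

lemma binEntInv_mem_Icc {x : ℝ} (hx : x ∈ Icc 0 (log 2)) : binEntInv x ∈ Icc 0 2⁻¹ := by
  obtain ⟨p, hp, rfl⟩ := exists_binEntropy_eq hx
  rwa [binEntInv_binEntropy hp]

lemma binEntropy_binEntInv {x : ℝ} (hx : x ∈ Icc 0 (log 2)) : binEntropy (binEntInv x) = x := by
  obtain ⟨p, hp, rfl⟩ := exists_binEntropy_eq hx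
  rw [binEntInv_binEntropy hp]

lemma binEntInv_mem_Ioo {x : ℝ} (hx : x ∈ Ioo 0 (log 2)) : binEntInv x ∈ Ioo 0 2⁻¹ := by
  have hx' := binEntropy_binEntInv (Ioo_subset_Icc_self hx)
  obtain ⟨h0, h2⟩ := binEntInv_mem_Icc (Ioo_subset_Icc_self hx)
  refine ⟨h0.lt_of_ne ?_, h2.lt_of_ne ?_⟩ <;> rintro h
  · simp only [← h, binEntropy_zero] at hx'
    linarith [hx.1]
  · simp only [h, binEntropy_two_inv] at hx'
    linarith [hx.2]

lemma binEntInv_monotoneOn : MonotoneOn binEntInv (Icc 0 (log 2)) := by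
  intro a ha b hb hab
  rw [← binEntropy_strictMonoOn.le_iff_le (binEntInv_mem_Icc ha) (binEntInv_mem_Icc hb),
    binEntropy_binEntInv ha, binEntropy_binEntInv hb]
  exact hab

lemma continuousOn_binEntInv : ContinuousOn binEntInv (Icc 0 (log 2)) := by
  let g : Icc 0 (log 2) → Icc (0 : ℝ) 2⁻¹ := fun x => ⟨binEntInv x, binEntInv_mem_Icc x.2⟩
  have hg : Continuous g := by
    refine Monotone.continuous_of_surjective (fun a b hab => binEntInv_monotoneOn a.2 b.2 hab) ?_
    intro p
    have hp : binEntropy p ∈ Icc 0 (log 2) :=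
      ⟨binEntropy_nonneg p.2.1 (p.2.2.trans (by norm_num)), binEntropy_le_log_two⟩
    exact ⟨⟨binEntropy p, hp⟩, Subtype.ext (binEntInv_binEntropy p.2)⟩
  exact continuousOn_iff_continuous_domRestrict.2 (continuous_subtype_val.comp hg)

noncomputable def binEntropySlope (t : ℝ) : ℝ := log (1 - t) - log t

lemma binEntropySlope_pos {t : ℝ} (ht : t ∈ Ioo 0 2⁻¹) : 0 < binEntropySlope t := by
  have := log_lt_log ht.1 (by linarith [ht.2] : t < 1 - t)
  unfold binEntropySlope
  linarith

lemma binEntropySlope_nonneg {t : ℝ} (ht : t ∈ Ioc 0 2⁻¹) : 0 ≤ binEntropySlope t := by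
  have := log_le_log ht.1 (by linarith [ht.2] : t ≤ 1 - t)
  unfold binEntropySlope
  linarith

lemma antitoneOn_binEntropySlope : AntitoneOn binEntropySlope (Ioo 0 1) := by
  intro a ha b hb hab
  have h1 := log_le_log (by linarith [hb.2]) (by linarith : 1 - b ≤ 1 - a)
  have h2 := log_le_log ha.1 hab
  unfold binEntropySlope
  linarith

lemma hasDerivAt_binEntropySlope {t : ℝ} (ht : t ∈ Ioo 0 1) :
    HasDerivAt binEntropySlope (-(t * (1 - t))⁻¹) t := by
  have h0 : t ≠ 0 := ht.1.ne'
  have h1 : (1 : ℝ) - t ≠ 0 := by linarith [ht.2]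
  have := (((hasDerivAt_id' t).const_sub 1).log h1).sub ((hasDerivAt_id' t).log h0)
  refine this.congr_deriv ?_
  field_simp
  ring

lemma hasDerivAt_binEntInv {x : ℝ} (hx : x ∈ Ioo 0 (log 2)) :
    HasDerivAt binEntInv (binEntropySlope (binEntInv x))⁻¹ x := by
  obtain ⟨hq0, hq2⟩ := binEntInv_mem_Ioo hx
  refine HasDerivAt.of_local_left_inverse
    (continuousOn_binEntInv.continuousAt (Icc_mem_nhds hx.1 hx.2))
    (hasDerivAt_binEntropy hq0.ne' (by linarith)) (binEntropySlope_pos ⟨hq0, hq2⟩).ne' ?_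
  filter_upwards [Ioo_mem_nhds hx.1 hx.2] with y hy
  exact binEntropy_binEntInv (Ioo_subset_Icc_self hy)

noncomputable def gerberPsi (t : ℝ) : ℝ := t * (1 - t) * binEntropySlope t

lemma hasDerivAt_gerberPsi {t : ℝ} (ht : t ∈ Ioo 0 1) :
    HasDerivAt gerberPsi ((1 - 2 * t) * binEntropySlope t - 1) t := by
  have h0 : t ≠ 0 := ht.1.ne'
  have h1 : (1 : ℝ) - t ≠ 0 := by linarith [ht.2]
  have := ((hasDerivAt_id' t).mul ((hasDerivAt_id' t).const_sub 1)).mul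
    (hasDerivAt_binEntropySlope ht)
  refine this.congr_deriv ?_
  simp only [Pi.mul_apply]
  field_simp
  ring

lemma concaveOn_gerberPsi : ConcaveOn ℝ (Ioc 0 2⁻¹) gerberPsi := by
  have hsub : Ioc (0 : ℝ) 2⁻¹ ⊆ Ioo 0 1 := fun t ht => ⟨ht.1, by linarith [ht.2]⟩
  have hderiv := fun t (ht : t ∈ Ioc (0 : ℝ) 2⁻¹) => hasDerivAt_gerberPsi (hsub ht)
  refine AntitoneOn.concaveOn_of_deriv (convex_Ioc 0 2⁻¹)
    (fun t ht => (hderiv t ht).continuousAt.continuousWithinAt)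
    (fun t ht => (hderiv t (interior_subset ht)).differentiableAt.differentiableWithinAt) ?_
  intro a ha b hb hab
  rw [interior_Ioc] at ha hb
  rw [(hderiv a (Ioo_subset_Ioc_self ha)).deriv, (hderiv b (Ioo_subset_Ioc_self hb)).deriv]
  gcongr ?_ - 1
  exact mul_le_mul (by linarith) (antitoneOn_binEntropySlope (hsub ⟨ha.1, ha.2.le⟩)
    (hsub ⟨hb.1, hb.2.le⟩) hab) (binEntropySlope_nonneg ⟨hb.1, hb.2.le⟩) (by linarith [ha.2])

lemma starOp_eq (p q : ℝ) : starOp p q = p + (1 - 2 * p) * q := by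
  unfold starOp
  ring

lemma mul_gerberPsi_le_gerberPsi_starOp {p q : ℝ} (hp : p ∈ Icc 0 2⁻¹) (hq : q ∈ Ioc 0 2⁻¹) :
    (1 - 2 * p) * gerberPsi q ≤ gerberPsi (starOp p q) := by
  have h := concaveOn_gerberPsi.2 hq (right_mem_Ioc.2 (by norm_num : (0 : ℝ) < 2⁻¹))
    (by linarith [hp.2] : 0 ≤ 1 - 2 * p) (by linarith [hp.1] : 0 ≤ 2 * p) (by ring)
  have hhalf : gerberPsi 2⁻¹ = 0 := by norm_num [gerberPsi, binEntropySlope]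
  have hs : (1 - 2 * p) • q + (2 * p) • (2⁻¹ : ℝ) = starOp p q := by
    rw [starOp_eq, smul_eq_mul, smul_eq_mul]
    ring
  rwa [hs, smul_eq_mul, smul_eq_mul, hhalf, mul_zero, add_zero] at h

lemma starOp_mem_Ioc {p q : ℝ} (hp : p ∈ Icc 0 2⁻¹) (hq : q ∈ Ioo 0 2⁻¹) :
    starOp p q ∈ Ioc 0 2⁻¹ := by
  rw [starOp_eq]
  obtain ⟨hp0, hp2⟩ := hp
  obtain ⟨hq0, hq2⟩ := hq
  constructor <;> nlinarith

lemma HasDerivAt.starOp {f : ℝ → ℝ} {f' x : ℝ} (hf : HasDerivAt f f' x) (p : ℝ) :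
    HasDerivAt (fun y => starOp p (f y)) ((1 - 2 * p) * f') x := by
  have := ((hf.const_sub 1).const_mul p).add (hf.mul_const (1 - p))
  exact this.congr_deriv (by ring)

noncomputable def gerberRatio (p q : ℝ) : ℝ := binEntropySlope (starOp p q) / binEntropySlope q

lemma hasDerivAt_gerberRatio {p q : ℝ} (hp : p ∈ Icc 0 2⁻¹) (hq : q ∈ Ioo 0 2⁻¹) :
    HasDerivAt (gerberRatio p)
      ((gerberPsi (starOp p q) - (1 - 2 * p) * gerberPsi q) /
        (q * (1 - q) * (starOp p q * (1 - starOp p q)) * binEntropySlope q ^ 2)) q := by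
  have hq1 : q ∈ Ioo 0 1 := ⟨hq.1, by linarith [hq.2]⟩
  obtain ⟨hs0, hs2⟩ := starOp_mem_Ioc hp hq
  have hs1 : starOp p q ∈ Ioo 0 1 := ⟨hs0, by linarith⟩
  have hL := (binEntropySlope_pos hq).ne'
  have := ((hasDerivAt_binEntropySlope hs1).comp q ((hasDerivAt_id q).starOp p)).div
    (hasDerivAt_binEntropySlope hq1) hL
  refine this.congr_deriv ?_
  have : q ≠ 0 := hq1.1.ne'
  have : 1 - q ≠ 0 := by linarith [hq1.2]
  have : starOp p q ≠ 0 := hs0.ne'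
  have : 1 - starOp p q ≠ 0 := by linarith
  simp only [gerberPsi, Function.comp_apply]
  field_simp
  ring

lemma monotoneOn_gerberRatio {p : ℝ} (hp : p ∈ Icc 0 2⁻¹) :
    MonotoneOn (gerberRatio p) (Ioo 0 2⁻¹) := by
  have hderiv := fun q (hq : q ∈ Ioo 0 2⁻¹) => hasDerivAt_gerberRatio hp hq
  refine monotoneOn_of_deriv_nonneg (convex_Ioo 0 2⁻¹)
    (fun q hq => (hderiv q hq).continuousAt.continuousWithinAt)
    (fun q hq => (hderiv q (interior_subset hq)).differentiableAt.differentiableWithinAt) ?_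
  intro q hq
  rw [interior_Ioo] at hq
  rw [(hderiv q hq).deriv]
  obtain ⟨hs0, hs2⟩ := starOp_mem_Ioc hp hq
  refine div_nonneg (sub_nonneg.2 (mul_gerberPsi_le_gerberPsi_starOp hp ⟨hq.1, hq.2.le⟩)) ?_
  exact mul_nonneg (mul_nonneg (mul_nonneg hq.1.le (by linarith [hq.2]))
    (mul_nonneg hs0.le (by linarith))) (sq_nonneg _)

lemma hasDerivAt_binEntropy_starOp_binEntInv {p y : ℝ} (hp : p ∈ Icc 0 2⁻¹)
    (hy : y ∈ Ioo 0 (log 2)) :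
    HasDerivAt (fun y => binEntropy (starOp p (binEntInv y)))
      ((1 - 2 * p) * gerberRatio p (binEntInv y)) y := by
  have hq := binEntInv_mem_Ioo hy
  obtain ⟨hs0, hs2⟩ := starOp_mem_Ioc hp hq
  have := (hasDerivAt_binEntropy hs0.ne' (by linarith)).comp y
    ((hasDerivAt_binEntInv hy).starOp p)
  exact this.congr_deriv (by unfold gerberRatio binEntropySlope; ring)

lemma convexOn_binEntropy_starOp_binEntInv {p : ℝ} (hp : p ∈ Icc 0 2⁻¹) :
    ConvexOn ℝ (Icc 0 (log 2)) (fun y => binEntropy (starOp p (binEntInv y))) := by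
  have hderiv := fun y (hy : y ∈ interior (Icc (0 : ℝ) (log 2))) =>
    hasDerivAt_binEntropy_starOp_binEntInv hp (by rwa [interior_Icc] at hy)
  refine MonotoneOn.convexOn_of_deriv (convex_Icc 0 (log 2)) ?_
    (fun y hy => (hderiv y hy).differentiableAt.differentiableWithinAt) ?_
  · have := continuousOn_binEntInv
    unfold starOp
    fun_prop
  · intro a ha b hb hab
    rw [(hderiv a ha).deriv, (hderiv b hb).deriv]
    rw [interior_Icc] at ha hb
    exact mul_le_mul_of_nonneg_left (monotoneOn_gerberRatio hp (binEntInv_mem_Ioo ha)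
      (binEntInv_mem_Ioo hb) (binEntInv_monotoneOn (Ioo_subset_Icc_self ha)
        (Ioo_subset_Icc_self hb) hab)) (by linarith [hp.2])

lemma starOp_comm (p q : ℝ) : starOp p q = starOp q p := by
  unfold starOp
  ring

lemma f₂_comm (x y : ℝ) : f₂ x y = f₂ y x := by
  rw [f₂, f₂, starOp_comm]

/-- **Mrs. Gerber's Lemma.** For each fixed `x ∈ [0, log 2]`, `y ↦ f₂ x y` is convex on
`[0, log 2]`, and symmetrically for each fixed `y`, `x ↦ f₂ x y` is convex on `[0, log 2]`. -/
theorem mrs_gerbers_lemma :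
    (∀ x ∈ Set.Icc (0 : ℝ) (Real.log 2),
      ConvexOn ℝ (Set.Icc (0 : ℝ) (Real.log 2)) (fun y => f₂ x y)) ∧
    (∀ y ∈ Set.Icc (0 : ℝ) (Real.log 2),
      ConvexOn ℝ (Set.Icc (0 : ℝ) (Real.log 2)) (fun x => f₂ x y)) := by
  have hconvex : ∀ x ∈ Icc 0 (log 2), ConvexOn ℝ (Icc 0 (log 2)) (fun y => f₂ x y) :=
    fun x hx => by
      simpa only [f₂, binEnt_eq_binEntropy] using
        convexOn_binEntropy_starOp_binEntInv (binEntInv_mem_Icc hx)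
  refine ⟨hconvex, fun y hy => ?_⟩
  simpa only [f₂_comm _ y] using hconvex y hy
end

section
/- Let G be an abelian group of order 2ⁿ and let k be an integer with 0 ≤ k ≤ n−1 and k log 2 ≤ x, y ≤ (k+1) log 2. Then there exist independent G-valued random variables X and Y with H(X) = x, H(Y) = y, and H(X+Y) = k log 2 + f₂(x − k log 2, y − k log 2); consequently f_G(x,y) ≤ k log 2 + f₂(x − k log 2, y − k log 2). -/
lemma exists_coset_structure (G : Type) [AddCommGroup G] [Fintype G] {n k : ℕ}
    (hcard : Fintype.card G = 2 ^ n) (hk : k + 1 ≤ n) :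
    ∃ (A : AddSubgroup G) (a : G), Nat.card A = 2 ^ k ∧ a ∉ A ∧ a + a ∈ A := by
  haveI : Fact (Nat.Prime 2) := ⟨Nat.prime_two⟩
  have hcM : Nat.card (Multiplicative G) = 2 ^ n := by
    simpa [Nat.card_eq_fintype_card] using hcard
  obtain ⟨H, hH⟩ := Sylow.exists_subgroup_card_pow_prime (G := Multiplicative G) 2
    (n := k + 1) (hcM ▸ pow_dvd_pow 2 hk)
  obtain ⟨K, hK⟩ := Sylow.exists_subgroup_card_pow_prime (G := ↥H) 2 (n := k)
    (hH ▸ pow_dvd_pow 2 (Nat.le_succ k))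
  have hidx : K.index = 2 := by
    have h1 := Subgroup.card_mul_index K
    rw [hK, hH, pow_succ] at h1
    exact Nat.eq_of_mul_eq_mul_left (by positivity) h1
  have hne : ∃ a' : ↥H, a' ∉ K := by
    by_contra h
    push_neg at h
    have hKtop : K = ⊤ := (Subgroup.eq_top_iff' K).2 h
    rw [hKtop] at hK
    have h2 : Nat.card ↥(⊤ : Subgroup ↥H) = 2 ^ (k+1) := by
      rw [Subgroup.card_top, hH]
    have := Nat.pow_right_injective (le_refl 2) (hK.symm.trans h2).symm
    omega
  obtain ⟨a', ha'⟩ := hne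
  have hsq : a' * a' ∈ K := by
    have := K.pow_index_mem a'
    rwa [hidx, pow_two] at this
  refine ⟨Subgroup.toAddSubgroup' (K.map H.subtype), Multiplicative.toAdd (a' : Multiplicative G),
    ?_, ?_, ?_⟩
  · have e := K.equivMapOfInjective H.subtype H.subtype_injective
    have h1 : Nat.card ↥(Subgroup.toAddSubgroup' (K.map H.subtype)) = Nat.card ↥(K.map H.subtype) :=
      Nat.card_congr ⟨fun x => ⟨x.1, x.2⟩, fun x => ⟨x.1, x.2⟩, fun _ => rfl, fun _ => rfl⟩
    rw [h1, ← Nat.card_congr e.toEquiv, hK]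
  · intro hmem
    have : Multiplicative.ofAdd (Multiplicative.toAdd (a' : Multiplicative G)) ∈ K.map H.subtype := hmem
    simp only [ofAdd_toAdd] at this
    obtain ⟨x, hx, hxe⟩ := this
    have : x = a' := H.subtype_injective hxe
    exact ha' (this ▸ hx)
  · show Multiplicative.ofAdd _ ∈ K.map H.subtype
    refine ⟨a' * a', hsq, ?_⟩
    simp [Subgroup.subtype]
    rfl

lemma binEnt_eq (p : ℝ) : binEnt p = Real.negMulLog p + Real.negMulLog (1 - p) := by
  simp only [binEnt, Real.negMulLog]; ring

lemma continuous_binEnt : Continuous binEnt := by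
  have : binEnt = fun p => Real.negMulLog p + Real.negMulLog (1 - p) := funext binEnt_eq
  rw [this]
  fun_prop

lemma binEnt_zero : binEnt 0 = 0 := by simp [binEnt]

lemma binEnt_half : binEnt (1/2) = Real.log 2 := by
  simp only [binEnt]
  rw [show (1:ℝ) - 1/2 = 1/2 by norm_num, Real.log_div one_ne_zero two_ne_zero, Real.log_one]
  ring

lemma binEntInv_spec {x : ℝ} (hx0 : 0 ≤ x) (hx1 : x ≤ Real.log 2) :
    binEntInv x ∈ Set.Icc (0:ℝ) (1/2) ∧ binEnt (binEntInv x) = x := by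
  have hSeq : {p : ℝ | p ∈ Set.Icc (0 : ℝ) (1 / 2) ∧ binEnt p = x}
      = Set.Icc (0:ℝ) (1/2) ∩ binEnt ⁻¹' {x} := by
    ext p; simp [Set.mem_inter_iff]
  have hne : {p : ℝ | p ∈ Set.Icc (0 : ℝ) (1 / 2) ∧ binEnt p = x}.Nonempty := by
    have hmem : x ∈ Set.Icc (binEnt 0) (binEnt (1/2)) := by
      rw [binEnt_zero, binEnt_half]; exact ⟨hx0, hx1⟩
    obtain ⟨p, hp, hpx⟩ := intermediate_value_Icc (by norm_num : (0:ℝ) ≤ 1/2)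
      continuous_binEnt.continuousOn hmem
    exact ⟨p, hp, hpx⟩
  have hclosed : IsClosed {p : ℝ | p ∈ Set.Icc (0 : ℝ) (1 / 2) ∧ binEnt p = x} := by
    rw [hSeq]
    exact isClosed_Icc.inter (isClosed_singleton.preimage continuous_binEnt)
  have hbdd : BddBelow {p : ℝ | p ∈ Set.Icc (0 : ℝ) (1 / 2) ∧ binEnt p = x} :=
    ⟨0, fun p hp => hp.1.1⟩
  have := hclosed.csInf_mem hne hbdd
  exact ⟨this.1, this.2⟩

set_option linter.unusedSectionVars false

section Combinatorics
variable {G : Type} [AddCommGroup G] [Fintype G] (A : AddSubgroup G) [Fintype ↥A]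

lemma sum_subtype_ite (g : G) (c : ℝ) [DecidableEq G] [DecidablePred (· ∈ A)] :
    (∑ u : ↥A, if (u : G) = g then c else 0) = if g ∈ A then c else 0 := by
  by_cases hg : g ∈ A
  · rw [if_pos hg, Finset.sum_eq_single (⟨g, hg⟩ : ↥A)]
    · simp
    · intro u _ hu
      rw [if_neg]
      intro h
      exact hu (Subtype.ext h)
    · simp
  · rw [if_neg hg]
    apply Finset.sum_eq_zero
    intro u _
    rw [if_neg]
    intro h
    exact hg (h ▸ u.2)

lemma sum_pair_ite {N : ℕ} (hcard : Fintype.card ↥A = N) (g : G) (c : ℝ)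
    [DecidableEq G] [DecidablePred (· ∈ A)] :
    (∑ u : ↥A, ∑ v : ↥A, if (u : G) + (v : G) = g then c else 0)
      = if g ∈ A then (N : ℝ) * c else 0 := by
  have hinner : ∀ u : ↥A, (∑ v : ↥A, if (u : G) + (v : G) = g then c else 0)
      = if g ∈ A then c else 0 := by
    intro u
    have h1 : ∀ v : ↥A, ((u : G) + (v : G) = g) ↔ ((v : G) = g - (u : G)) := by
      intro v
      constructor
      · intro h; rw [← h]; abel
      · intro h; rw [h]; abel
    have h2 : (g - (u : G) ∈ A) ↔ g ∈ A := by
      constructor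
      · intro h
        have := A.add_mem h u.2
        simpa using this
      · intro h
        exact A.sub_mem h u.2
    simp_rw [h1]
    rw [sum_subtype_ite A (g - (u:G)) c, if_congr h2 rfl rfl]
  rw [Finset.sum_congr rfl (fun u _ => hinner u), Finset.sum_const, Finset.card_univ, hcard,
    nsmul_eq_mul]
  by_cases hg : g ∈ A <;> simp [hg]

lemma ent_two_cosets (a : G) (ha : a ∉ A) (k : ℕ) (hcard : Fintype.card ↥A = 2 ^ k) (r : ℝ)
    [DecidableEq G] [DecidablePred (· ∈ A)] :
    ∑ s : G, Real.negMulLog ((if s ∈ A then (1 - r) / ((2^k : ℕ) : ℝ) else 0)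
        + (if s - a ∈ A then r / ((2^k : ℕ) : ℝ) else 0))
      = k * Real.log 2 + binEnt r := by
  have hN : (0:ℝ) < ((2^k : ℕ) : ℝ) := by positivity
  have hdisj : ∀ s : G, s ∈ A → s - a ∈ A → False := by
    intro s h1 h2
    have := A.sub_mem h1 h2
    simp only [sub_sub_cancel] at this
    exact ha this
  have hsplit : ∀ s : G,
      Real.negMulLog ((if s ∈ A then (1 - r) / ((2^k : ℕ) : ℝ) else 0)
        + (if s - a ∈ A then r / ((2^k : ℕ) : ℝ) else 0))
      = (if s ∈ A then Real.negMulLog ((1 - r) / ((2^k : ℕ) : ℝ)) else 0)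
        + (if s - a ∈ A then Real.negMulLog (r / ((2^k : ℕ) : ℝ)) else 0) := by
    intro s
    by_cases h1 : s ∈ A
    · by_cases h2 : s - a ∈ A
      · exact (hdisj s h1 h2).elim
      · simp [h1, h2]
    · by_cases h2 : s - a ∈ A <;> simp [h1, h2]
  rw [Finset.sum_congr rfl (fun s _ => hsplit s), Finset.sum_add_distrib]
  have hcount : ∀ c : ℝ, (∑ s : G, if s ∈ A then c else 0) = ((2^k : ℕ) : ℝ) * c := by
    intro c
    have hfc : (Finset.univ.filter (· ∈ A)).card = 2 ^ k := by
      rw [← hcard]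
      exact (Fintype.card_of_subtype _ (by simp)).symm
    rw [← Finset.sum_filter, Finset.sum_const, hfc, nsmul_eq_mul]
  have hshift : ∀ c : ℝ, (∑ s : G, if s - a ∈ A then c else 0)
      = ∑ s : G, if s ∈ A then c else 0 := by
    intro c
    exact Fintype.sum_equiv (Equiv.subRight a) _ _ (fun s => rfl)
  rw [hshift, hcount, hcount]
  have halg : ∀ c : ℝ, ((2^k : ℕ) : ℝ) * Real.negMulLog (c / ((2^k : ℕ) : ℝ))
      = Real.negMulLog c + c * Real.log ((2^k : ℕ) : ℝ) := by
    intro c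
    rw [div_eq_mul_inv, Real.negMulLog_mul, Real.negMulLog, Real.negMulLog, Real.log_inv]
    field_simp
  rw [halg, halg, binEnt_eq]
  have hlog : Real.log ((2^k : ℕ) : ℝ) = k * Real.log 2 := by
    push_cast
    rw [Real.log_pow]
  rw [hlog]
  ring

end Combinatorics

lemma toReal_sum_indicator_ofReal {α : Type*} [Fintype α] (f : α → ℝ) (hf : ∀ z, 0 ≤ f z)
    (S : Set α) :
    (∑ z, S.indicator (fun z => ENNReal.ofReal (f z)) z).toReal = ∑ z, S.indicator f z := by
  rw [ENNReal.toReal_sum]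
  · refine Finset.sum_congr rfl fun z _ => ?_
    by_cases hz : z ∈ S <;> simp [Set.indicator_apply, hz, ENNReal.toReal_ofReal (hf z)]
  · intro z _
    by_cases hz : z ∈ S <;> simp [Set.indicator_apply, hz]

open MeasureTheory ENNReal in
lemma exists_good_rv (G : Type) [AddCommGroup G] [Fintype G] (A : AddSubgroup G) (a : G)
    (k : ℕ) (hA : Nat.card A = 2 ^ k) (ha : a ∉ A) (haa : a + a ∈ A)
    (p q : ℝ) (hp0 : 0 ≤ p) (hp1 : p ≤ 1) (hq0 : 0 ≤ q) (hq1 : q ≤ 1) :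
    ∃ (Ω : Type) (_ : MeasurableSpace Ω) (μ : Measure Ω),
      IsProbabilityMeasure μ ∧ ∃ X Y : Ω → G, IndepRV μ X Y ∧
        entropy μ X = k * Real.log 2 + binEnt p ∧
        entropy μ Y = k * Real.log 2 + binEnt q ∧
        entropy μ (fun ω => X ω + Y ω) = k * Real.log 2 + binEnt (starOp p q) := by
  classical
  haveI : Fintype ↥A := Fintype.ofFinite ↥A
  have hcard : Fintype.card ↥A = 2 ^ k := by rw [← Nat.card_eq_fintype_card, hA]
  set Nr : ℝ := ((2 ^ k : ℕ) : ℝ) with hNr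
  have hNpos : (0:ℝ) < Nr := by rw [hNr]; positivity
  set w : ℝ → ↥A × Bool → ℝ := fun r z => Nr⁻¹ * (if z.2 then r else 1 - r) with hw
  have hw_nonneg : ∀ r, 0 ≤ r → r ≤ 1 → ∀ z, 0 ≤ w r z := by
    intro r h0 h1 z
    apply mul_nonneg (by positivity)
    by_cases hb : z.2 <;> simp [hb] <;> linarith
  have hw_sum : ∀ r : ℝ, ∑ z : ↥A × Bool, w r z = 1 := by
    intro r
    rw [Fintype.sum_prod_type]
    have h1 : ∀ u : ↥A, ∑ b : Bool, w r (u, b) = Nr⁻¹ := by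
      intro u
      rw [Fintype.sum_bool]
      simp only [hw, if_true, Bool.false_eq_true, if_false]
      ring
    rw [Finset.sum_congr rfl fun u _ => h1 u, Finset.sum_const, Finset.card_univ, hcard,
      nsmul_eq_mul]
    rw [← hNr]
    field_simp
  set φ : ↥A × Bool → G := fun z => (z.1 : G) + (if z.2 then a else 0) with hφ
  set W : (↥A × Bool) × (↥A × Bool) → ℝ := fun ω => w p ω.1 * w q ω.2 with hW
  have hW_nonneg : ∀ ω, 0 ≤ W ω := fun ω =>
    mul_nonneg (hw_nonneg p hp0 hp1 _) (hw_nonneg q hq0 hq1 _)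
  letI : MeasurableSpace ((↥A × Bool) × (↥A × Bool)) := ⊤
  haveI : MeasurableSingletonClass ((↥A × Bool) × (↥A × Bool)) := ⟨fun _ => trivial⟩
  have hpmf_sum : ∑ ω : (↥A × Bool) × (↥A × Bool), ENNReal.ofReal (W ω) = 1 := by
    rw [← ENNReal.ofReal_sum_of_nonneg (fun ω _ => hW_nonneg ω)]
    rw [Fintype.sum_prod_type]
    simp_rw [hW]
    rw [← Finset.sum_mul_sum]
    rw [hw_sum p, hw_sum q, mul_one, ENNReal.ofReal_one]
  set pm : PMF ((↥A × Bool) × (↥A × Bool)) :=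
    PMF.ofFintype (fun ω => ENNReal.ofReal (W ω)) hpmf_sum with hpm
  set μ : Measure ((↥A × Bool) × (↥A × Bool)) := pm.toMeasure with hμdef
  haveI : IsProbabilityMeasure μ := PMF.toMeasure.isProbabilityMeasure pm
  set X : (↥A × Bool) × (↥A × Bool) → G := fun ω => φ ω.1 with hX
  set Y : (↥A × Bool) × (↥A × Bool) → G := fun ω => φ ω.2 with hY
  set ep : ↥A × Bool → ℝ≥0∞ := fun z => ENNReal.ofReal (w p z) with hep
  set eq' : ↥A × Bool → ℝ≥0∞ := fun z => ENNReal.ofReal (w q z) with heq'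
  have hep1 : ∑ z, ep z = 1 := by
    rw [hep, ← ENNReal.ofReal_sum_of_nonneg (fun z _ => hw_nonneg p hp0 hp1 z), hw_sum p,
      ENNReal.ofReal_one]
  have heq1 : ∑ z, eq' z = 1 := by
    rw [heq', ← ENNReal.ofReal_sum_of_nonneg (fun z _ => hw_nonneg q hq0 hq1 z), hw_sum q,
      ENNReal.ofReal_one]
  have hprod : ∀ S T : Set (↥A × Bool),
      μ (S ×ˢ T) = (∑ z, S.indicator ep z) * (∑ z, T.indicator eq' z) := by
    intro S T
    rw [hμdef, PMF.toMeasure_apply_fintype]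
    rw [Fintype.sum_prod_type]
    have hptwise : ∀ z₁ z₂, (S ×ˢ T).indicator (⇑pm) (z₁, z₂)
        = S.indicator ep z₁ * T.indicator eq' z₂ := by
      intro z₁ z₂
      by_cases h1 : z₁ ∈ S <;> by_cases h2 : z₂ ∈ T <;>
        simp [Set.indicator_apply, h1, h2, hpm, PMF.ofFintype_apply, hW, hep, heq',
          ENNReal.ofReal_mul (hw_nonneg p hp0 hp1 z₁)]
    simp_rw [hptwise]
    rw [← Finset.sum_mul_sum]
  have hXpre : ∀ s : G, X ⁻¹' {s} = (φ ⁻¹' {s}) ×ˢ (Set.univ : Set (↥A × Bool)) := by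
    intro s; ext ω; simp [hX, Set.mem_prod]
  have hYpre : ∀ t : G, Y ⁻¹' {t} = (Set.univ : Set (↥A × Bool)) ×ˢ (φ ⁻¹' {t}) := by
    intro t; ext ω; simp [hY, Set.mem_prod]
  have hXYpre : ∀ s t : G, X ⁻¹' {s} ∩ Y ⁻¹' {t} = (φ ⁻¹' {s}) ×ˢ (φ ⁻¹' {t}) := by
    intro s t; ext ω; simp [hX, hY, Set.mem_prod, and_comm]
  have hindep : IndepRV μ X Y := by
    intro s t
    rw [hXYpre, hprod, hXpre, hprod, hYpre, hprod, Set.indicator_univ, Set.indicator_univ,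
      hep1, heq1, mul_one, one_mul]
  -- distribution of X
  have hone_sided : ∀ (r : ℝ), 0 ≤ r → r ≤ 1 → ∀ s : G,
      (∑ z, (φ ⁻¹' {s}).indicator (w r) z)
        = (if s ∈ A then (1 - r) / Nr else 0) + (if s - a ∈ A then r / Nr else 0) := by
    intro r hr0 hr1 s
    have hind : ∀ z : ↥A × Bool, (φ ⁻¹' {s}).indicator (w r) z
        = if φ z = s then w r z else 0 := by
      intro z; simp [Set.indicator_apply]
    rw [Finset.sum_congr rfl fun z _ => hind z, Fintype.sum_prod_type]
    have hb : ∀ u : ↥A, (∑ b : Bool, if φ (u, b) = s then w r (u, b) else 0)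
        = (if (u : G) = s - a then Nr⁻¹ * r else 0)
          + (if (u : G) = s then Nr⁻¹ * (1 - r) else 0) := by
      intro u
      rw [Fintype.sum_bool]
      congr 1
      · rw [show φ (u, true) = (u : G) + a from by simp [hφ],
          show w r (u, true) = Nr⁻¹ * r from by simp [hw]]
        exact if_congr eq_sub_iff_add_eq.symm rfl rfl
      · rw [show φ (u, false) = (u : G) from by simp [hφ],
          show w r (u, false) = Nr⁻¹ * (1 - r) from by simp [hw]]
    rw [Finset.sum_congr rfl fun u _ => hb u, Finset.sum_add_distrib,
      sum_subtype_ite A (s - a) (Nr⁻¹ * r), sum_subtype_ite A s (Nr⁻¹ * (1 - r)), add_comm]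
    have e1 : Nr⁻¹ * (1 - r) = (1 - r) / Nr := by ring
    have e2 : Nr⁻¹ * r = r / Nr := by ring
    rw [e1, e2]
  have hdX : ∀ s : G, (μ (X ⁻¹' {s})).toReal
      = (if s ∈ A then (1 - p) / Nr else 0) + (if s - a ∈ A then p / Nr else 0) := by
    intro s
    rw [hXpre, hprod, Set.indicator_univ, heq1, mul_one, hep]
    rw [toReal_sum_indicator_ofReal (w p) (hw_nonneg p hp0 hp1)]
    exact hone_sided p hp0 hp1 s
  have hdY : ∀ t : G, (μ (Y ⁻¹' {t})).toReal
      = (if t ∈ A then (1 - q) / Nr else 0) + (if t - a ∈ A then q / Nr else 0) := by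
    intro t
    rw [hYpre, hprod, Set.indicator_univ, hep1, one_mul, heq']
    rw [toReal_sum_indicator_ofReal (w q) (hw_nonneg q hq0 hq1)]
    exact hone_sided q hq0 hq1 t
  have hμall : ∀ S : Set ((↥A × Bool) × (↥A × Bool)), (μ S).toReal = ∑ ω, S.indicator W ω := by
    intro S
    rw [hμdef, PMF.toMeasure_apply_fintype]
    have hc : ⇑pm = fun ω => ENNReal.ofReal (W ω) := rfl
    rw [hc]
    exact toReal_sum_indicator_ofReal W hW_nonneg S
  have hdZ : ∀ s : G, (μ ((fun ω => X ω + Y ω) ⁻¹' {s})).toReal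
      = (if s ∈ A then (1 - starOp p q) / Nr else 0)
        + (if s - a ∈ A then starOp p q / Nr else 0) := by
    intro s
    rw [hμall]
    have hind : ∀ ω, ((fun ω => X ω + Y ω) ⁻¹' {s}).indicator W ω
        = if φ ω.1 + φ ω.2 = s then W ω else 0 := by
      intro ω; simp [Set.indicator_apply, hX, hY]
    rw [Finset.sum_congr rfl fun ω _ => hind ω]
    rw [← Fintype.sum_equiv
      (⟨fun y => ((y.2.1, y.1.1), (y.2.2, y.1.2)), fun ω => ((ω.1.2, ω.2.2), (ω.1.1, ω.2.1)),
        fun _ => rfl, fun _ => rfl⟩ : (Bool × Bool) × (↥A × ↥A) ≃ (↥A × Bool) × (↥A × Bool))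
      (fun y => if φ (y.2.1, y.1.1) + φ (y.2.2, y.1.2) = s
        then w p (y.2.1, y.1.1) * w q (y.2.2, y.1.2) else 0)
      (fun ω => if φ ω.1 + φ ω.2 = s then W ω else 0) (fun y => rfl)]
    simp only [Fintype.sum_prod_type, Fintype.sum_bool]
    simp only [hφ, hw, if_true, Bool.false_eq_true, if_false, add_zero]
    have cTT : ∀ (u v : ↥A), (((u:G) + a + ((v:G) + a) = s)) ↔ ((u:G) + (v:G) = s - (a+a)) := by
      intro u v
      rw [eq_sub_iff_add_eq]
      constructor <;> intro h <;> rw [← h] <;> abel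
    have cTF : ∀ (u v : ↥A), (((u:G) + a + (v:G) = s)) ↔ ((u:G) + (v:G) = s - a) := by
      intro u v
      rw [eq_sub_iff_add_eq]
      constructor <;> intro h <;> rw [← h] <;> abel
    have cFT : ∀ (u v : ↥A), (((u:G) + ((v:G) + a) = s)) ↔ ((u:G) + (v:G) = s - a) := by
      intro u v
      rw [eq_sub_iff_add_eq]
      constructor <;> intro h <;> rw [← h] <;> abel
    simp_rw [cTT, cTF, cFT]
    rw [sum_pair_ite A hcard, sum_pair_ite A hcard, sum_pair_ite A hcard, sum_pair_ite A hcard]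
    have hmem2 : (s - (a + a) ∈ A) ↔ (s ∈ A) :=
      ⟨fun h => by simpa using A.add_mem h haa, fun h => A.sub_mem h haa⟩
    rw [if_congr hmem2 rfl rfl]
    have hNne : Nr ≠ 0 := ne_of_gt hNpos
    rw [show ((2^k : ℕ) : ℝ) = Nr from hNr.symm]
    by_cases h1 : s ∈ A
    · have h2 : ¬ (s - a ∈ A) := fun h2 => ha (by simpa using A.sub_mem h1 h2)
      simp only [h1, h2, if_true, if_false, starOp]
      field_simp
      ring
    · by_cases h2 : s - a ∈ A
      · simp only [h1, h2, if_true, if_false, starOp]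
        field_simp
        ring
      · simp only [h1, h2, if_true, if_false, starOp]
        simp
  have hentX : entropy μ X = k * Real.log 2 + binEnt p := by
    unfold entropy
    rw [tsum_fintype, Finset.sum_congr rfl fun s _ => by rw [hdX s], hNr]
    exact ent_two_cosets A a ha k hcard p
  have hentY : entropy μ Y = k * Real.log 2 + binEnt q := by
    unfold entropy
    rw [tsum_fintype, Finset.sum_congr rfl fun t _ => by rw [hdY t], hNr]
    exact ent_two_cosets A a ha k hcard q
  have hentZ : entropy μ (fun ω => X ω + Y ω) = k * Real.log 2 + binEnt (starOp p q) := by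
    unfold entropy
    rw [tsum_fintype, Finset.sum_congr rfl fun s _ => by rw [hdZ s], hNr]
    exact ent_two_cosets A a ha k hcard (starOp p q)
  exact ⟨(↥A × Bool) × (↥A × Bool), inferInstance, μ, inferInstance, X, Y, hindep,
    hentX, hentY, hentZ⟩


lemma entropy_nonneg {Ω S : Type*} [MeasurableSpace Ω] (μ : MeasureTheory.Measure Ω)
    [MeasureTheory.IsProbabilityMeasure μ] (X : Ω → S) : 0 ≤ entropy μ X := by
  apply tsum_nonneg
  intro s
  apply Real.negMulLog_nonneg ENNReal.toReal_nonneg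
  have h1 : μ (X ⁻¹' {s}) ≤ 1 := MeasureTheory.prob_le_one
  calc (μ (X ⁻¹' {s})).toReal ≤ (1 : ENNReal).toReal := ENNReal.toReal_mono ENNReal.one_ne_top h1
    _ = 1 := by simp

/-- Achievability: for `G` of order `2ⁿ` and `k log 2 ≤ x, y ≤ (k+1) log 2`, there are
independent `G`-valued `X, Y` with the prescribed entropies achieving
`H(X+Y) = k log 2 + f₂(x − k log 2, y − k log 2)`; hence `f_G(x,y)` is at most this value. -/
theorem fG_upper_bound_achievable (n : ℕ) (G : Type) [AddCommGroup G] [Fintype G]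
    (hcard : Fintype.card G = 2 ^ n) (k : ℕ) (hk : k + 1 ≤ n) (x y : ℝ)
    (hx₁ : (k : ℝ) * Real.log 2 ≤ x) (hx₂ : x ≤ ((k : ℝ) + 1) * Real.log 2)
    (hy₁ : (k : ℝ) * Real.log 2 ≤ y) (hy₂ : y ≤ ((k : ℝ) + 1) * Real.log 2) :
    (∃ (Ω : Type) (_ : MeasurableSpace Ω) (μ : MeasureTheory.Measure Ω),
      MeasureTheory.IsProbabilityMeasure μ ∧ ∃ X Y : Ω → G, IndepRV μ X Y ∧
        entropy μ X = x ∧ entropy μ Y = y ∧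
        entropy μ (fun ω => X ω + Y ω) =
          k * Real.log 2 + f₂ (x - k * Real.log 2) (y - k * Real.log 2)) ∧
    fG G x y ≤ k * Real.log 2 + f₂ (x - k * Real.log 2) (y - k * Real.log 2) := by
  classical
  have hlog2 : (0:ℝ) < Real.log 2 := Real.log_pos (by norm_num)
  have hexp : ((k:ℝ) + 1) * Real.log 2 = k * Real.log 2 + Real.log 2 := by ring
  have hx'0 : 0 ≤ x - k * Real.log 2 := by linarith
  have hx'1 : x - k * Real.log 2 ≤ Real.log 2 := by linarith
  have hy'0 : 0 ≤ y - k * Real.log 2 := by linarith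
  have hy'1 : y - k * Real.log 2 ≤ Real.log 2 := by linarith
  obtain ⟨hpmem, hpval⟩ := binEntInv_spec hx'0 hx'1
  obtain ⟨hqmem, hqval⟩ := binEntInv_spec hy'0 hy'1
  obtain ⟨A, a, hA, ha, haa⟩ := exists_coset_structure G hcard hk
  obtain ⟨Ω, mΩ, μ, hprob, X, Y, hind, hXent, hYent, hZent⟩ :=
    exists_good_rv G A a k hA ha haa
      (binEntInv (x - k * Real.log 2)) (binEntInv (y - k * Real.log 2))
      hpmem.1 (le_trans hpmem.2 (by norm_num))
      hqmem.1 (le_trans hqmem.2 (by norm_num))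
  have hXx : entropy μ X = x := by rw [hXent, hpval]; ring
  have hYy : entropy μ Y = y := by rw [hYent, hqval]; ring
  have hZf : entropy μ (fun ω => X ω + Y ω)
      = k * Real.log 2 + f₂ (x - k * Real.log 2) (y - k * Real.log 2) := by
    rw [hZent]; rfl
  have hmem : (k : ℝ) * Real.log 2 + f₂ (x - k * Real.log 2) (y - k * Real.log 2) ∈
      { z : ℝ | ∃ (Ω : Type) (_ : MeasurableSpace Ω) (μ : MeasureTheory.Measure Ω),
        MeasureTheory.IsProbabilityMeasure μ ∧ ∃ X Y : Ω → G, IndepRV μ X Y ∧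
          entropy μ X = x ∧ entropy μ Y = y ∧ entropy μ (fun ω => X ω + Y ω) = z } :=
    ⟨Ω, mΩ, μ, hprob, X, Y, hind, hXx, hYy, hZf⟩
  refine ⟨⟨Ω, mΩ, μ, hprob, X, Y, hind, hXx, hYy, hZf⟩, ?_⟩
  apply csInf_le
  · refine ⟨0, fun z hz => ?_⟩
    obtain ⟨Ω', m', μ', hμ', X', Y', _, _, _, hz'⟩ := hz
    rw [← hz']
    haveI := hμ'
    exact entropy_nonneg μ' _
  · exact hmem
end
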